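/- arXiv:2101.07203 — 3 statements merged into one kernel-verified Lean document; each statement's English description precedes it below -/
import Mathlib

section
/- Let ξ, ξ' be iid real random variables and for w ∈ ℝ define ‖w‖_ξ := (E ‖w(ξ - ξ')‖²_{ℝ/ℤ})^{1/2}. Then for any real number w, |E e^{i w ξ}| ≤ exp(-c ‖w/(2π)‖²_ξ) for an absolute constant c > 0. -/
set_option maxHeartbeats 1000000
open MeasureTheory ProbabilityTheory

noncomputable def dist01 (x : ℝ) : ℝ := |x - round x|

lemma cos_le_one_sub (t : ℝ) : Real.cos (2 * Real.pi * t) ≤ 1 - 8 * dist01 t ^ 2 := by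
  have hs : |t - round t| ≤ 1/2 := abs_sub_round t
  have h1 : Real.cos (2 * Real.pi * t) = Real.cos (2 * (Real.pi * (t - round t))) := by
    have : 2 * Real.pi * t = 2 * (Real.pi * (t - round t)) + (round t) * (2 * Real.pi) := by ring
    rw [this, Real.cos_add_int_mul_two_pi]
  rw [h1, Real.cos_two_mul, ← Real.sin_sq_add_cos_sq (Real.pi * (t - round t))]
  have h2 : 2 * |t - round t| ≤ |Real.sin (Real.pi * (t - round t))| := by
    have := Real.mul_le_sin (x := Real.pi * |t - round t|)
      (by positivity) (by nlinarith [Real.pi_pos])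
    calc 2 * |t - round t| = 2 / Real.pi * (Real.pi * |t - round t|) := by
          field_simp
      _ ≤ Real.sin (Real.pi * |t - round t|) := this
      _ ≤ |Real.sin (Real.pi * (t - round t))| := by
          rcases abs_cases (t - round t) with ⟨h, _⟩ | ⟨h, _⟩
          · rw [h]; exact le_abs_self _
          · rw [h, mul_neg, Real.sin_neg]; exact neg_le_abs _
  have h3 : (2 * |t - round t|)^2 ≤ Real.sin (Real.pi * (t - round t)) ^ 2 := by
    rw [← sq_abs (Real.sin _)]
    exact pow_le_pow_left₀ (by positivity) h2 2
  unfold dist01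
  nlinarith [sq_abs (t - round t)]


lemma indep_integral_mul_complex {Ω : Type} {mΩ : MeasurableSpace Ω} {μ : Measure Ω}
    [IsProbabilityMeasure μ] {U V : Ω → ℂ} (h : IndepFun U V μ)
    (hU : Measurable U) (hV : Measurable V)
    (hbU : ∀ ω, ‖U ω‖ ≤ 1) (hbV : ∀ ω, ‖V ω‖ ≤ 1) :
    ∫ ω, U ω * V ω ∂μ = (∫ ω, U ω ∂μ) * ∫ ω, V ω ∂μ := by
  have haU : Measurable fun ω => (U ω).re := Complex.measurable_re.comp hU
  have hcU : Measurable fun ω => (U ω).im := Complex.measurable_im.comp hU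
  have haV : Measurable fun ω => (V ω).re := Complex.measurable_re.comp hV
  have hcV : Measurable fun ω => (V ω).im := Complex.measurable_im.comp hV
  have intboundR : ∀ f : Ω → ℝ, Measurable f → (∀ ω, |f ω| ≤ 1) → Integrable f μ := by
    intro f hf hb
    exact Integrable.mono' (integrable_const 1) hf.aestronglyMeasurable
      (ae_of_all _ fun ω => by simpa [Real.norm_eq_abs] using hb ω)
  have int1 : Integrable (fun ω => (U ω).re) μ :=
    intboundR _ haU fun ω => (Complex.abs_re_le_norm _).trans (hbU ω)
  have int2 : Integrable (fun ω => (U ω).im) μ :=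
    intboundR _ hcU fun ω => (Complex.abs_im_le_norm _).trans (hbU ω)
  have int3 : Integrable (fun ω => (V ω).re) μ :=
    intboundR _ haV fun ω => (Complex.abs_re_le_norm _).trans (hbV ω)
  have int4 : Integrable (fun ω => (V ω).im) μ :=
    intboundR _ hcV fun ω => (Complex.abs_im_le_norm _).trans (hbV ω)
  have intU : Integrable U μ :=
    Integrable.mono' (integrable_const 1) hU.aestronglyMeasurable
      (ae_of_all _ fun ω => by simpa using hbU ω)
  have intV : Integrable V μ :=
    Integrable.mono' (integrable_const 1) hV.aestronglyMeasurable
      (ae_of_all _ fun ω => by simpa using hbV ω)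
  have intUV : Integrable (fun ω => U ω * V ω) μ := by
    refine Integrable.mono' (integrable_const 1) ((hU.mul hV).aestronglyMeasurable)
      (ae_of_all _ fun ω => ?_)
    rw [norm_mul]
    exact mul_le_one₀ (hbU ω) (norm_nonneg _) (hbV ω)
  have i1 : IndepFun (fun ω => (U ω).re) (fun ω => (V ω).re) μ :=
    h.comp Complex.measurable_re Complex.measurable_re
  have i2 : IndepFun (fun ω => (U ω).re) (fun ω => (V ω).im) μ :=
    h.comp Complex.measurable_re Complex.measurable_im
  have i3 : IndepFun (fun ω => (U ω).im) (fun ω => (V ω).re) μ :=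
    h.comp Complex.measurable_im Complex.measurable_re
  have i4 : IndepFun (fun ω => (U ω).im) (fun ω => (V ω).im) μ :=
    h.comp Complex.measurable_im Complex.measurable_im
  have p1 : ∫ ω, (U ω).re * (V ω).re ∂μ = (∫ ω, (U ω).re ∂μ) * ∫ ω, (V ω).re ∂μ :=
    i1.integral_fun_mul_eq_mul_integral int1.1 int3.1
  have p2 : ∫ ω, (U ω).re * (V ω).im ∂μ = (∫ ω, (U ω).re ∂μ) * ∫ ω, (V ω).im ∂μ :=
    i2.integral_fun_mul_eq_mul_integral int1.1 int4.1
  have p3 : ∫ ω, (U ω).im * (V ω).re ∂μ = (∫ ω, (U ω).im ∂μ) * ∫ ω, (V ω).re ∂μ :=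
    i3.integral_fun_mul_eq_mul_integral int2.1 int3.1
  have p4 : ∫ ω, (U ω).im * (V ω).im ∂μ = (∫ ω, (U ω).im ∂μ) * ∫ ω, (V ω).im ∂μ :=
    i4.integral_fun_mul_eq_mul_integral int2.1 int4.1
  have hre := Complex.reCLM.integral_comp_comm intUV
  have him := Complex.imCLM.integral_comp_comm intUV
  have hUre := Complex.reCLM.integral_comp_comm intU
  have hUim := Complex.imCLM.integral_comp_comm intU
  have hVre := Complex.reCLM.integral_comp_comm intV
  have hVim := Complex.imCLM.integral_comp_comm intV
  simp only [Complex.reCLM_apply, Complex.imCLM_apply] at hre him hUre hUim hVre hVim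
  apply Complex.ext
  · rw [Complex.mul_re, ← hUre, ← hVre, ← hUim, ← hVim, ← hre]
    have heq : ∫ ω, (U ω * V ω).re ∂μ
        = ∫ ω, ((U ω).re * (V ω).re - (U ω).im * (V ω).im) ∂μ := by
      simp_rw [Complex.mul_re]
    have j1 : Integrable (fun ω => (U ω).re * (V ω).re) μ := i1.integrable_mul int1 int3
    have j4 : Integrable (fun ω => (U ω).im * (V ω).im) μ := i4.integrable_mul int2 int4
    rw [heq, integral_sub j1 j4, p1, p4]
  · rw [Complex.mul_im, ← hUre, ← hVre, ← hUim, ← hVim, ← him]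
    have heq : ∫ ω, (U ω * V ω).im ∂μ
        = ∫ ω, ((U ω).re * (V ω).im + (U ω).im * (V ω).re) ∂μ := by
      simp_rw [Complex.mul_im]
    have j2 : Integrable (fun ω => (U ω).re * (V ω).im) μ := i2.integrable_mul int1 int4
    have j3 : Integrable (fun ω => (U ω).im * (V ω).re) μ := i3.integrable_mul int2 int3
    rw [heq, integral_add j2 j3, p2, p3]

/-- There is an absolute constant c > 0 such that for iid real random
variables ξ, ξ' and any w ∈ ℝ, |E e^{iwξ}| ≤ exp(-c ‖w/(2π)‖²_ξ), where
‖w‖²_ξ = E ‖w(ξ-ξ')‖²_{ℝ/ℤ}. -/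
theorem stmt8 :
    ∃ c : ℝ, 0 < c ∧
      ∀ (Ω : Type) (mΩ : MeasurableSpace Ω) (μ : Measure Ω),
        IsProbabilityMeasure μ →
        ∀ ξ ξ' : Ω → ℝ, Measurable ξ → Measurable ξ' →
          IndepFun ξ ξ' μ → IdentDistrib ξ ξ' μ μ →
          ∀ w : ℝ,
            ‖∫ ω, Complex.exp (Complex.I * (w * ξ ω)) ∂μ‖
              ≤ Real.exp (-(c * ∫ ω, dist01 ((w / (2 * Real.pi)) * (ξ ω - ξ' ω)) ^ 2 ∂μ)) := by
  refine ⟨4, by norm_num, fun Ω mΩ μ hμ ξ ξ' hξ hξ' hind hid w => ?_⟩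
  haveI := hμ
  set f : ℝ → ℂ := fun x => Complex.exp (Complex.I * (w * x)) with hf
  set g : ℝ → ℂ := fun x => Complex.exp (-Complex.I * (w * x)) with hg
  have hfm : Measurable f := by unfold f; fun_prop
  have hgm : Measurable g := by unfold g; fun_prop
  set A : ℂ := ∫ ω, f (ξ ω) ∂μ with hA
  -- conj A
  have habs : ∀ x : ℝ, ‖f x‖ = 1 := by
    intro x
    simp only [hf]
    rw [show Complex.I * (w * x) = ((w * x : ℝ) : ℂ) * Complex.I by push_cast; ring]
    exact Complex.norm_exp_ofReal_mul_I _
  have habsg : ∀ x : ℝ, ‖g x‖ = 1 := by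
    intro x
    simp only [hg]
    rw [show -Complex.I * (w * x) = ((-(w * x) : ℝ) : ℂ) * Complex.I by push_cast; ring]
    exact Complex.norm_exp_ofReal_mul_I _
  have hint_f : Integrable (fun ω => f (ξ ω)) μ := by
    refine Integrable.mono' (μ := μ) (integrable_const 1) (hfm.comp hξ).aestronglyMeasurable
      (ae_of_all _ fun ω => ?_)
    rw [habs]
  have hint_g : Integrable (fun ω => g (ξ' ω)) μ := by
    refine Integrable.mono' (μ := μ) (integrable_const 1) (hgm.comp hξ').aestronglyMeasurable
      (ae_of_all _ fun ω => ?_)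
    rw [habsg]
  have hconj : ∀ x : ℝ, (starRingEnd ℂ) (f x) = g x := by
    intro x
    simp only [hf, hg, ← Complex.exp_conj, map_mul, Complex.conj_I, Complex.conj_ofReal]
  have hconjA : (starRingEnd ℂ) A = ∫ ω, g (ξ' ω) ∂μ := by
    rw [hA, ← integral_conj]
    have h1 : (∫ ω, (starRingEnd ℂ) (f (ξ ω)) ∂μ) = ∫ ω, g (ξ ω) ∂μ := by
      simp_rw [hconj]
    rw [h1]
    exact (hid.comp hgm).integral_eq
  -- independence
  have hprod : A * (starRingEnd ℂ) A
      = ∫ ω, Complex.exp (Complex.I * (w * (ξ ω - ξ' ω))) ∂μ := by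
    have hmul : (∫ ω, f (ξ ω) * g (ξ' ω) ∂μ)
        = (∫ ω, f (ξ ω) ∂μ) * ∫ ω, g (ξ' ω) ∂μ :=
      indep_integral_mul_complex (hind.comp hfm hgm) (hfm.comp hξ) (hgm.comp hξ')
        (fun ω => le_of_eq (habs _)) (fun ω => le_of_eq (habsg _))
    rw [hconjA, hA, ← hmul]
    congr 1; funext ω
    simp only [hf, hg, ← Complex.exp_add]
    congr 1
    push_cast
    ring
  -- real part
  have hre : ‖A‖ ^ 2 = ∫ ω, Real.cos (w * (ξ ω - ξ' ω)) ∂μ := by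
    have h2 : ((‖A‖ ^ 2 : ℝ) : ℂ)
        = ∫ ω, Complex.exp (Complex.I * (w * (ξ ω - ξ' ω))) ∂μ := by
      rw [← hprod, Complex.sq_norm]
      exact (Complex.mul_conj A).symm
    have h3 : ‖A‖ ^ 2
        = (∫ ω, Complex.exp (Complex.I * (w * (ξ ω - ξ' ω))) ∂μ).re := by
      rw [← h2, Complex.ofReal_re]
    have hint2 : Integrable (fun ω => Complex.exp (Complex.I * (w * (ξ ω - ξ' ω)))) μ := by
      have h6 : (fun ω => Complex.exp (Complex.I * (w * (ξ ω - ξ' ω))))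
          = fun ω => f (ξ ω - ξ' ω) := by
        funext ω; simp only [hf]; push_cast; ring_nf
      rw [h6]
      refine Integrable.mono' (μ := μ) (integrable_const 1)
        ((hfm.comp (hξ.sub hξ')).aestronglyMeasurable) (ae_of_all _ fun ω => ?_)
      rw [habs]
    have h4 := Complex.reCLM.integral_comp_comm hint2
    simp only [Complex.reCLM_apply] at h4
    rw [h3, ← h4]
    congr 1; funext ω
    rw [show Complex.I * ((w : ℂ) * ((ξ ω : ℂ) - (ξ' ω : ℂ)))
          = ((w * (ξ ω - ξ' ω) : ℝ) : ℂ) * Complex.I by push_cast; ring,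
      Complex.exp_ofReal_mul_I_re]
  -- cosine integral bound
  set I : ℝ := ∫ ω, dist01 ((w / (2 * Real.pi)) * (ξ ω - ξ' ω)) ^ 2 ∂μ with hI
  have hcos_int : Integrable (fun ω => Real.cos (w * (ξ ω - ξ' ω))) μ := by
    refine Integrable.mono' (integrable_const 1)
      ((Real.measurable_cos.comp (measurable_const.mul (hξ.sub hξ'))).aestronglyMeasurable)
      (ae_of_all _ fun ω => by simpa using Real.abs_cos_le_one _)
  have hbound : ∀ ω, 8 * dist01 ((w / (2 * Real.pi)) * (ξ ω - ξ' ω)) ^ 2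
      ≤ 1 - Real.cos (w * (ξ ω - ξ' ω)) := by
    intro ω
    have := cos_le_one_sub ((w / (2 * Real.pi)) * (ξ ω - ξ' ω))
    have heq : 2 * Real.pi * ((w / (2 * Real.pi)) * (ξ ω - ξ' ω)) = w * (ξ ω - ξ' ω) := by
      field_simp
    rw [heq] at this
    linarith
  have hI8 : 8 * I ≤ 1 - ‖A‖^2 := by
    have h5 : ∫ ω, 8 * dist01 ((w / (2 * Real.pi)) * (ξ ω - ξ' ω)) ^ 2 ∂μ
        ≤ ∫ ω, (1 - Real.cos (w * (ξ ω - ξ' ω))) ∂μ := by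
      refine integral_mono_of_nonneg (ae_of_all _ fun ω => by positivity)
        ((integrable_const 1).sub hcos_int) (ae_of_all _ hbound)
    simp_rw [← smul_eq_mul (a := (8:ℝ)), integral_smul, smul_eq_mul] at h5
    rw [integral_sub (integrable_const 1) hcos_int, integral_const] at h5
    simp only [measure_univ, probReal_univ, ENNReal.toReal_one, smul_eq_mul, mul_one, one_smul] at h5
    rw [hre]
    linarith
  -- conclude
  have hInn : 0 ≤ I := by
    refine integral_nonneg fun ω => by positivity
  have hsq : ‖A‖^2 ≤ Real.exp (-(4 * I)) ^ 2 := by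
    have : Real.exp (-(4*I)) ^ 2 = Real.exp (-(8*I)) := by
      rw [sq, ← Real.exp_add]; ring_nf
    rw [this]
    calc ‖A‖^2 ≤ 1 - 8 * I := by linarith
      _ ≤ Real.exp (-(8*I)) := by
          have := Real.add_one_le_exp (-(8*I)); linarith
  nlinarith [norm_nonneg A, Real.exp_pos (-(4*I))]
end

section
/- Let ξ be a real sub-Gaussian random variable with mean zero and variance one, and let ξ' be an independent copy. Then there exist constants a₁, a₂, c > 0, depending only on the sub-Gaussian moment of ξ, such that P(a₁ < |ξ - ξ'| < a₂) ≥ c. -/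
open MeasureTheory ProbabilityTheory

open Set Filter Real


lemma cube_gauss {b : ℝ} (hb : 0 < b) :
    ∫ t in Set.Ioi (0:ℝ), t ^ 3 * Real.exp (-b * t ^ 2) = 1 / (2 * b ^ 2) := by
  have hderiv : ∀ t ∈ Set.Ici (0:ℝ), HasDerivAt
      (fun x : ℝ => -(x ^ 2 / (2 * b) + 1 / (2 * b ^ 2)) * Real.exp (-b * x ^ 2))
      (t ^ 3 * Real.exp (-b * t ^ 2)) t := by
    intro t _
    have h1 : HasDerivAt (fun x : ℝ => -(x ^ 2 / (2 * b) + 1 / (2 * b ^ 2)))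
        (-(2 * t / (2 * b))) t := by
      have := (((hasDerivAt_pow 2 t).div_const (2*b)).add_const (1/(2*b^2))).neg
      refine this.congr_deriv ?_
      norm_num
    have h2 : HasDerivAt (fun x : ℝ => Real.exp (-b * x ^ 2))
        (Real.exp (-b * t ^ 2) * (-b * (2 * t))) t := by
      have := ((hasDerivAt_pow 2 t).const_mul (-b)).exp
      simpa using this
    have h3 := h1.fun_mul h2
    refine h3.congr_deriv ?_
    field_simp [hb.ne']
    ring
  have hint : IntegrableOn (fun t : ℝ => t ^ 3 * Real.exp (-b * t ^ 2)) (Set.Ioi 0) := by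
    have := integrableOn_rpow_mul_exp_neg_mul_sq hb (s := 3) (by norm_num)
    apply this.congr_fun ?_ measurableSet_Ioi
    intro x hx
    show x ^ (3:ℝ) * Real.exp (-b*x^2) = x ^ 3 * Real.exp (-b*x^2)
    rw [← Real.rpow_natCast x 3]
    norm_num
  have htend : Tendsto (fun x : ℝ => -(x ^ 2 / (2 * b) + 1 / (2 * b ^ 2)) * Real.exp (-b * x ^ 2))
      atTop (nhds 0) := by
    have h1 : Tendsto (fun x : ℝ => x ^ 2 * Real.exp (-b * x ^ 2)) atTop (nhds 0) := by
      have hg : Tendsto (fun x : ℝ => b * x ^ 2) atTop atTop :=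
        (tendsto_pow_atTop (two_ne_zero)).const_mul_atTop hb
      have := (Real.tendsto_pow_mul_exp_neg_atTop_nhds_zero 1).comp hg
      have h2 := this.const_mul (1/b)
      rw [mul_zero] at h2
      convert h2 using 2 with x
      field_simp [Function.comp]
      ring_nf
      simp only [Function.comp]
      ring_nf
    have h2 : Tendsto (fun x : ℝ => Real.exp (-b * x ^ 2)) atTop (nhds 0) := by
      have hg : Tendsto (fun x : ℝ => -b * x ^ 2) atTop atBot := by
        have h := (tendsto_pow_atTop (two_ne_zero : (2:ℕ) ≠ 0)).const_mul_atTop hb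
        exact (tendsto_neg_atTop_atBot.comp h).congr fun x => by
          simp [Function.comp, neg_mul]
      exact Real.tendsto_exp_atBot.comp hg
    have := ((h1.const_mul (-(1/(2*b)))).add (h2.const_mul (-(1/(2*b^2)))))
    simp only [mul_zero, add_zero] at this
    convert this using 2 with x
    ring
  have key := integral_Ioi_of_hasDerivAt_of_tendsto' hderiv hint htend
  rw [key]
  norm_num


lemma fourth_moment {Ω : Type} [MeasurableSpace Ω] (μ : Measure Ω) [IsProbabilityMeasure μ]
    {K : ℝ} (hK : 0 < K) (X : Ω → ℝ) (hX : Measurable X)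
    (htail : ∀ t : ℝ, 0 < t →
      μ {ω | t < |X ω|} ≤ ENNReal.ofReal (2 * Real.exp (-(t ^ 2 / K ^ 2)))) :
    ∫⁻ ω, ENNReal.ofReal ((X ω) ^ 4) ∂μ ≤ ENNReal.ofReal (4 * K ^ 4) := by
  have hb : (0:ℝ) < (K ^ 2)⁻¹ := by positivity
  have layer := lintegral_comp_eq_lintegral_meas_lt_mul μ
      (f := fun ω => |X ω|) (g := fun t => 4 * t ^ 3)
      (Filter.Eventually.of_forall fun ω => abs_nonneg _)
      (hX.abs).aemeasurable
      (fun t _ => ((continuous_const.mul (continuous_pow 3)).intervalIntegrable _ _))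
      ((ae_restrict_iff' measurableSet_Ioi).mpr
        (Filter.Eventually.of_forall fun t ht => by
          have h0 : (0:ℝ) < t := ht
          positivity))
  have hLHS : ∀ ω, ENNReal.ofReal (∫ t in (0:ℝ)..|X ω|, 4 * t ^ 3)
      = ENNReal.ofReal ((X ω) ^ 4) := by
    intro ω
    rw [intervalIntegral.integral_const_mul, integral_pow]
    have habs : |X ω| ^ 4 = X ω ^ 4 := by
      rw [pow_abs, abs_of_nonneg (by positivity : (0:ℝ) ≤ X ω ^ 4)]
    norm_num [habs]
    rw [show (4:ENNReal) = ENNReal.ofReal 4 by simp, ← ENNReal.ofReal_mul (by positivity)]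
    congr 1
    ring
  simp_rw [hLHS] at layer
  rw [layer]
  have step1 : ∫⁻ t in Ioi (0:ℝ), μ {a | t < |X a|} * ENNReal.ofReal (4 * t ^ 3)
      ≤ ∫⁻ t in Ioi (0:ℝ),
          ENNReal.ofReal (8 * (t ^ 3 * Real.exp (-(K ^ 2)⁻¹ * t ^ 2))) := by
    apply setLIntegral_mono' measurableSet_Ioi
    intro t ht
    have h1 := mul_le_mul_left (htail t ht) (ENNReal.ofReal (4 * t ^ 3))
    refine h1.trans (le_of_eq ?_)
    rw [← ENNReal.ofReal_mul (by positivity)]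
    congr 1
    rw [show -(t ^ 2 / K ^ 2) = -(K ^ 2)⁻¹ * t ^ 2 by ring]
    ring
  refine (step1.trans ?_)
  have hint : IntegrableOn (fun t : ℝ => 8 * (t ^ 3 * Real.exp (-(K ^ 2)⁻¹ * t ^ 2)))
      (Ioi 0) := by
    have := integrableOn_rpow_mul_exp_neg_mul_sq hb (s := 3) (by norm_num)
    apply MeasureTheory.IntegrableOn.congr_fun (this.const_mul 8) ?_ measurableSet_Ioi
    intro x hx
    have h3 : x ^ (3:ℝ) = x ^ (3:ℕ) := by
      rw [← Real.rpow_natCast x 3]; norm_num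
    simp [h3]
  rw [← MeasureTheory.ofReal_integral_eq_lintegral_ofReal hint
      ((ae_restrict_iff' measurableSet_Ioi).mpr
        (Filter.Eventually.of_forall fun t ht => by
          have h0 : (0:ℝ) < t := ht
          positivity))]
  apply ENNReal.ofReal_le_ofReal
  rw [MeasureTheory.integral_const_mul, cube_gauss hb]
  refine le_of_eq ?_
  field_simp
  ring

set_option maxHeartbeats 1000000 in
/-- For a mean-zero, unit-variance real sub-Gaussian variable ξ (with
sub-Gaussian moment K) and an independent copy ξ', there are a₁, a₂, c > 0 depending
only on K with P(a₁ < |ξ - ξ'| < a₂) ≥ c. -/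
theorem stmt9 (K : ℝ) (hK : 0 < K) :
    ∃ a₁ a₂ c : ℝ, 0 < a₁ ∧ a₁ ≤ a₂ ∧ 0 < c ∧
      ∀ (Ω : Type) (mΩ : MeasurableSpace Ω) (μ : Measure Ω),
        IsProbabilityMeasure μ →
        ∀ ξ ξ' : Ω → ℝ, Measurable ξ → Measurable ξ' →
          IndepFun ξ ξ' μ → IdentDistrib ξ ξ' μ μ →
          (∀ t : ℝ, 0 < t →
            μ {ω | t < |ξ ω|} ≤ ENNReal.ofReal (2 * Real.exp (-(t ^ 2 / K ^ 2)))) →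
          (∫ ω, ξ ω ∂μ) = 0 → (∫ ω, (ξ ω) ^ 2 ∂μ) = 1 →
          ENNReal.ofReal c ≤ μ {ω | a₁ < |ξ ω - ξ' ω| ∧ |ξ ω - ξ' ω| < a₂} := by
  obtain ⟨s, hs⟩ : ∃ s : ℝ, s = 8 * K ^ 2 + 1 := ⟨_, rfl⟩
  have hs1 : (1:ℝ) ≤ s := by nlinarith [sq_nonneg K, hs]
  have hs0 : (0:ℝ) < s := by linarith
  refine ⟨1/2, s + 1, 1 / (2 * s ^ 2), by norm_num, by nlinarith, by positivity, ?_⟩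
  intro Ω mΩ μ hProb ξ ξ' hmξ hmξ' hIndep hId htail hmean hvar
  -- fourth moment of ξ
  have hL4 := fourth_moment μ hK ξ hmξ htail
  have hInt4 : Integrable (fun ω => (ξ ω) ^ 4) μ := by
    refine ⟨(hmξ.pow_const 4).aestronglyMeasurable, ?_⟩
    rw [hasFiniteIntegral_iff_ofReal (Filter.Eventually.of_forall fun ω => by positivity)]
    exact lt_of_le_of_lt hL4 ENNReal.ofReal_lt_top
  have hI4 : ∫ ω, (ξ ω) ^ 4 ∂μ ≤ 4 * K ^ 4 := by
    rw [integral_eq_lintegral_of_nonneg_ae (Filter.Eventually.of_forall fun ω => by positivity)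
      (hmξ.pow_const 4).aestronglyMeasurable]
    calc (∫⁻ ω, ENNReal.ofReal ((ξ ω) ^ 4) ∂μ).toReal
        ≤ (ENNReal.ofReal (4 * K ^ 4)).toReal :=
          ENNReal.toReal_mono ENNReal.ofReal_ne_top hL4
      _ = 4 * K ^ 4 := ENNReal.toReal_ofReal (by positivity)
  -- transfer to ξ'
  have hId4 : IdentDistrib (fun ω => (ξ ω) ^ 4) (fun ω => (ξ' ω) ^ 4) μ μ :=
    hId.comp (measurable_id.pow_const 4)
  have hInt4' : Integrable (fun ω => (ξ' ω) ^ 4) μ := hId4.integrable_iff.mp hInt4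
  have hI4' : ∫ ω, (ξ' ω) ^ 4 ∂μ ≤ 4 * K ^ 4 := by rw [← hId4.integral_eq]; exact hI4
  -- lower moments
  have sq_le : ∀ x : ℝ, x ^ 2 ≤ 1 + x ^ 4 := by
    intro x; nlinarith [sq_nonneg (x ^ 2 - 1)]
  have abs_le : ∀ x : ℝ, |x| ≤ 1 + x ^ 2 := by
    intro x
    rcases abs_cases x with ⟨h, _⟩ | ⟨h, _⟩ <;> nlinarith [sq_nonneg (x - 1), sq_nonneg (x + 1)]
  have hInt2 : Integrable (fun ω => (ξ ω) ^ 2) μ := by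
    refine Integrable.mono' ((integrable_const 1).add hInt4)
      (hmξ.pow_const 2).aestronglyMeasurable
      (Filter.Eventually.of_forall fun ω => ?_)
    rw [Real.norm_eq_abs, abs_of_nonneg (by positivity : (0:ℝ) ≤ (ξ ω) ^ 2)]
    exact sq_le _
  have hInt2' : Integrable (fun ω => (ξ' ω) ^ 2) μ :=
    (hId.comp (measurable_id.pow_const 2)).integrable_iff.mp hInt2
  have hInt1 : Integrable ξ μ := by
    refine Integrable.mono' ((integrable_const 1).add hInt2)
      hmξ.aestronglyMeasurable (Filter.Eventually.of_forall fun ω => ?_)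
    rw [Real.norm_eq_abs]
    exact abs_le _
  have hInt1' : Integrable ξ' μ := hId.integrable_iff.mp hInt1
  have hId2 : IdentDistrib (fun ω => (ξ ω) ^ 2) (fun ω => (ξ' ω) ^ 2) μ μ :=
    hId.comp (measurable_id.pow_const 2)
  have hvar' : ∫ ω, (ξ' ω) ^ 2 ∂μ = 1 := by
    rw [← hId2.integral_eq]; exact hvar
  have hmean' : ∫ ω, ξ' ω ∂μ = 0 := by rw [← hId.integral_eq]; exact hmean
  have hIntmul : Integrable (fun ω => ξ ω * ξ' ω) μ := hIndep.integrable_mul hInt1 hInt1'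
  have hmul0 : ∫ ω, ξ ω * ξ' ω ∂μ = 0 := by
    have h : (∫ ω, ξ ω * ξ' ω ∂μ) = (∫ ω, ξ ω ∂μ) * ∫ ω, ξ' ω ∂μ :=
      hIndep.integral_mul_eq_mul_integral hInt1.aestronglyMeasurable hInt1'.aestronglyMeasurable
    rw [h, hmean, hmean', mul_zero]
  -- second moment of the difference
  have hIntη2 : Integrable (fun ω => (ξ ω - ξ' ω) ^ 2) μ := by
    refine (((hInt2.add hInt2').sub (hIntmul.const_mul 2)).congr
      (Filter.Eventually.of_forall fun ω => ?_))
    show (ξ ω) ^ 2 + (ξ' ω) ^ 2 - 2 * (ξ ω * ξ' ω) = (ξ ω - ξ' ω) ^ 2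
    ring
  have hEη2 : ∫ ω, (ξ ω - ξ' ω) ^ 2 ∂μ = 2 := by
    have : (fun ω => (ξ ω - ξ' ω) ^ 2)
        = fun ω => (ξ ω) ^ 2 + (ξ' ω) ^ 2 - 2 * (ξ ω * ξ' ω) := by
      funext ω; ring
    have e1 : ∫ ω, ((ξ ω) ^ 2 + (ξ' ω) ^ 2 - 2 * (ξ ω * ξ' ω)) ∂μ
        = (∫ ω, ((ξ ω) ^ 2 + (ξ' ω) ^ 2) ∂μ) - ∫ ω, 2 * (ξ ω * ξ' ω) ∂μ :=
      integral_sub (hInt2.add hInt2') (hIntmul.const_mul 2)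
    have e2 : ∫ ω, ((ξ ω) ^ 2 + (ξ' ω) ^ 2) ∂μ
        = (∫ ω, (ξ ω) ^ 2 ∂μ) + ∫ ω, (ξ' ω) ^ 2 ∂μ := integral_add hInt2 hInt2'
    have e3 : ∫ ω, 2 * (ξ ω * ξ' ω) ∂μ = 2 * ∫ ω, ξ ω * ξ' ω ∂μ :=
      integral_const_mul 2 _
    rw [this, e1, e2, e3, hvar, hvar', hmul0]
    norm_num
  -- fourth moment of the difference
  have hptη4 : ∀ x y : ℝ, (x - y) ^ 4 ≤ 8 * x ^ 4 + 8 * y ^ 4 := by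
    intro x y
    nlinarith [sq_nonneg (x ^ 2 - y ^ 2), sq_nonneg (x + y), sq_nonneg (x - y),
      sq_nonneg (x * y), sq_nonneg ((x - y) ^ 2)]
  have hIntη4 : Integrable (fun ω => (ξ ω - ξ' ω) ^ 4) μ := by
    refine Integrable.mono' ((hInt4.const_mul 8).add (hInt4'.const_mul 8))
      ((hmξ.sub hmξ').pow_const 4).aestronglyMeasurable
      (Filter.Eventually.of_forall fun ω => ?_)
    rw [Real.norm_eq_abs, abs_of_nonneg (by positivity : (0:ℝ) ≤ (ξ ω - ξ' ω) ^ 4)]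
    exact hptη4 _ _
  have hEη4 : ∫ ω, (ξ ω - ξ' ω) ^ 4 ∂μ ≤ 64 * K ^ 4 := by
    calc ∫ ω, (ξ ω - ξ' ω) ^ 4 ∂μ
        ≤ ∫ ω, (8 * (ξ ω) ^ 4 + 8 * (ξ' ω) ^ 4) ∂μ :=
          integral_mono hIntη4 ((hInt4.const_mul 8).add (hInt4'.const_mul 8))
            fun ω => hptη4 _ _
      _ = 8 * (∫ ω, (ξ ω) ^ 4 ∂μ) + 8 * (∫ ω, (ξ' ω) ^ 4 ∂μ) := by
          rw [integral_add (hInt4.const_mul 8) (hInt4'.const_mul 8),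
            integral_const_mul, integral_const_mul]
      _ ≤ 8 * (4 * K ^ 4) + 8 * (4 * K ^ 4) := by
          gcongr
      _ = 64 * K ^ 4 := by ring
  -- the annulus
  obtain ⟨A, hA⟩ : ∃ A : Set Ω, A = {ω | 1/2 < |ξ ω - ξ' ω| ∧ |ξ ω - ξ' ω| < s + 1} :=
    ⟨_, rfl⟩
  have hAmeas : MeasurableSet A := by
    rw [hA]
    exact (measurableSet_lt measurable_const (hmξ.sub hmξ').abs).inter
      (measurableSet_lt (hmξ.sub hmξ').abs measurable_const)
  -- pointwise bound
  have hpt : ∀ ω, (ξ ω - ξ' ω) ^ 2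
      ≤ (1/2) ^ 2 + A.indicator (fun _ => s ^ 2) ω + (ξ ω - ξ' ω) ^ 4 / s ^ 2 := by
    intro ω
    obtain ⟨x, hx⟩ : ∃ x : ℝ, x = ξ ω - ξ' ω := ⟨_, rfl⟩
    rw [← hx]
    have hind : (0:ℝ) ≤ A.indicator (fun _ => s ^ 2) ω := by
      apply Set.indicator_nonneg
      intro _ _; positivity
    rcases le_or_gt |x| (1/2) with h1 | h1
    · have : x ^ 2 ≤ (1/2) ^ 2 := by
        rw [← sq_abs]
        exact pow_le_pow_left₀ (abs_nonneg _) h1 2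
      have h4 : (0:ℝ) ≤ x ^ 4 / s ^ 2 := by positivity
      linarith
    · rcases le_or_gt |x| s with h2 | h2
      · have hω : ω ∈ A := by
          rw [hA]
          refine ⟨?_, ?_⟩ <;> rw [← hx]
          · exact h1
          · linarith
        have : A.indicator (fun _ => s ^ 2) ω = s ^ 2 := Set.indicator_of_mem hω _
        have hx2 : x ^ 2 ≤ s ^ 2 := by
          rw [← sq_abs]
          exact pow_le_pow_left₀ (abs_nonneg _) h2 2
        have h4 : (0:ℝ) ≤ x ^ 4 / s ^ 2 := by positivity
        rw [this]
        have h4' : (0:ℝ) ≤ x ^ 4 / s ^ 2 := h4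
        linarith
      · have hs2 : s ^ 2 < x ^ 2 := by
          rw [← sq_abs x]
          exact pow_lt_pow_left₀ h2 hs0.le two_ne_zero
        have : x ^ 2 ≤ x ^ 4 / s ^ 2 := by
          rw [le_div_iff₀ (by positivity)]
          nlinarith [sq_nonneg x]
        nlinarith
  -- integrate
  have hRHSint : Integrable
      (fun ω => (1/2 : ℝ) ^ 2 + A.indicator (fun _ => s ^ 2) ω + (ξ ω - ξ' ω) ^ 4 / s ^ 2) μ :=
    ((integrable_const _).add ((integrable_const (s ^ 2)).indicator hAmeas)).add
      (hIntη4.div_const _)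
  have hmono := integral_mono hIntη2 hRHSint hpt
  rw [hEη2] at hmono
  have hRHSval : ∫ ω, ((1/2 : ℝ) ^ 2 + A.indicator (fun _ => s ^ 2) ω
      + (ξ ω - ξ' ω) ^ 4 / s ^ 2) ∂μ
      = (1/2) ^ 2 + s ^ 2 * (μ A).toReal + (∫ ω, (ξ ω - ξ' ω) ^ 4 ∂μ) / s ^ 2 := by
    have i1 : Integrable (fun ω => (1/2 : ℝ) ^ 2 + A.indicator (fun _ => s ^ 2) ω) μ :=
      (integrable_const _).add ((integrable_const (s ^ 2)).indicator hAmeas)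
    have e1 : ∫ ω, ((1/2 : ℝ) ^ 2 + A.indicator (fun _ => s ^ 2) ω
        + (ξ ω - ξ' ω) ^ 4 / s ^ 2) ∂μ
        = (∫ ω, ((1/2 : ℝ) ^ 2 + A.indicator (fun _ => s ^ 2) ω) ∂μ)
          + ∫ ω, (ξ ω - ξ' ω) ^ 4 / s ^ 2 ∂μ := integral_add i1 (hIntη4.div_const _)
    have e2 : ∫ ω, ((1/2 : ℝ) ^ 2 + A.indicator (fun _ => s ^ 2) ω) ∂μ
        = (∫ _ω, ((1/2 : ℝ) ^ 2) ∂μ) + ∫ ω, A.indicator (fun _ => s ^ 2) ω ∂μ :=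
      integral_add (integrable_const _) ((integrable_const (s ^ 2)).indicator hAmeas)
    have e3 : ∫ ω, A.indicator (fun _ => s ^ 2) ω ∂μ = (μ A).toReal • s ^ 2 :=
      integral_indicator_const _ hAmeas
    have e4 : ∫ ω, (ξ ω - ξ' ω) ^ 4 / s ^ 2 ∂μ = (∫ ω, (ξ ω - ξ' ω) ^ 4 ∂μ) / s ^ 2 :=
      integral_div _ _
    rw [e1, e2, e3, e4, integral_const]
    simp [smul_eq_mul]
    ring
  rw [hRHSval] at hmono
  have htails : (∫ ω, (ξ ω - ξ' ω) ^ 4 ∂μ) / s ^ 2 ≤ 1 := by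
    rw [div_le_one (by positivity)]
    refine hEη4.trans ?_
    nlinarith [sq_nonneg K, pow_pos hK 4, sq_nonneg (K ^ 2), hs]
  have hm : 1 / (2 * s ^ 2) ≤ (μ A).toReal := by
    rw [div_le_iff₀ (by positivity)]
    nlinarith [hmono, htails]
  rw [← hA]
  exact ENNReal.ofReal_le_of_le_toReal hm
end

section
/- Fix real numbers t₁, ..., t_m and a positive integer n, and suppose there exists κ > 0 such that each t_r is n^κ-smooth, meaning ‖p₀ t_r /(π n)‖_{ℝ/ℤ} > n^κ / n for every nonzero integer p₀ with |p₀| ≤ n^κ + 1. Then there exist an integer q₀ with 1 ≤ q₀ ≤ n^κ and real numbers s₁, ..., s_m such that q₀ t_r /(2π n) - s_r ∈ ℤ for each r, and Σ_{r=1}^{m} s_r² ≤ m · n^{-2κ/m}. -/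
open MeasureTheory Metric Set

/-- If t₁,...,t_m are n^κ-smooth, then there are an integer q₀ with
1 ≤ q₀ ≤ n^κ and reals s₁,...,s_m with q₀ t_r/(2πn) - s_r ∈ ℤ for each r and
Σ_r s_r² ≤ m n^{-2κ/m}. -/
theorem stmt12 (m n : ℕ) (hm : 0 < m) (hn : 0 < n) (κ : ℝ) (hκ : 0 < κ)
    (t : Fin m → ℝ)
    (hsmooth : ∀ r : Fin m, ∀ p₀ : ℤ, p₀ ≠ 0 → (|p₀| : ℝ) ≤ (n : ℝ) ^ κ + 1 →
      (n : ℝ) ^ κ / n < dist01 ((p₀ : ℝ) * t r / (Real.pi * n))) :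
    ∃ q₀ : ℤ, 1 ≤ q₀ ∧ (q₀ : ℝ) ≤ (n : ℝ) ^ κ ∧
      ∃ s : Fin m → ℝ,
        (∀ r : Fin m, ∃ z : ℤ, (q₀ : ℝ) * t r / (2 * Real.pi * n) - s r = (z : ℝ)) ∧
        (∑ r, s r ^ 2) ≤ (m : ℝ) * (n : ℝ) ^ (-(2 * κ) / m) := by
  clear hsmooth
  haveI : Fact ((0:ℝ) < 1) := ⟨zero_lt_one⟩
  have hn1 : (1:ℝ) ≤ (n:ℝ) := by exact_mod_cast hn
  have hm0 : (m:ℝ) ≠ 0 := by positivity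
  set δ : ℝ := (n:ℝ) ^ (-(κ/m)) with hδdef
  have hδpos : 0 < δ := Real.rpow_pos_of_pos (by positivity) _
  have hδle1 : δ ≤ 1 := Real.rpow_le_one_of_one_le_of_nonpos hn1 (by
    have : 0 ≤ κ / m := by positivity
    linarith)
  have hδm : δ ^ m = (n:ℝ) ^ (-κ) := by
    rw [← Real.rpow_natCast δ m, hδdef, ← Real.rpow_mul (by positivity)]
    congr 1
    field_simp
  set N : ℕ := ⌊(n:ℝ) ^ κ⌋₊ with hNdef
  have hN1 : 1 ≤ N := Nat.le_floor (by simpa using Real.one_le_rpow hn1 hκ.le)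
  have hNle : (N:ℝ) ≤ (n:ℝ) ^ κ := Nat.floor_le (by positivity)
  have hNlt : (n:ℝ) ^ κ < N + 1 := Nat.lt_floor_add_one _
  set α : Fin m → ℝ := fun r => t r / (2 * Real.pi * n) with hαdef
  set f : Fin (N+1) → (Fin m → AddCircle (1:ℝ)) :=
    fun q r => (((q:ℕ) : ℝ) * α r : ℝ) with hfdef
  set S : Fin (N+1) → Set (Fin m → AddCircle (1:ℝ)) :=
    fun q => closedBall (f q) (δ/2) with hSdef
  have hvol : ∀ q, volume (S q) = ENNReal.ofReal δ ^ m := by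
    intro q
    rw [hSdef]
    simp only
    rw [closedBall_pi _ (by positivity), volume_pi_pi]
    have hmin : min (1:ℝ) (2*(δ/2)) = δ := by
      rw [show 2*(δ/2) = δ by ring]; exact min_eq_right hδle1
    simp [AddCircle.volume_closedBall, hmin]
  have huniv : volume (univ : Set (Fin m → AddCircle (1:ℝ))) = 1 := by
    rw [← Set.pi_univ Set.univ, volume_pi_pi]
    simp [AddCircle.measure_univ]
  have hlt : volume (univ : Set (Fin m → AddCircle (1:ℝ))) < ∑' q, volume (S q) := by
    rw [huniv, tsum_fintype]
    simp only [hvol, Finset.sum_const, Finset.card_univ, Fintype.card_fin, nsmul_eq_mul]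
    rw [← ENNReal.ofReal_pow hδpos.le, hδm, ← ENNReal.ofReal_natCast,
      ← ENNReal.ofReal_mul (by positivity), ← ENNReal.ofReal_one]
    rw [ENNReal.ofReal_lt_ofReal_iff (by positivity)]
    have hpow : (0:ℝ) < (n:ℝ) ^ κ := by positivity
    rw [Real.rpow_neg (by positivity), ← div_eq_mul_inv, lt_div_iff₀ hpow, one_mul]
    push_cast
    linarith
  obtain ⟨q, q', hne, hinter⟩ :=
    exists_nonempty_inter_of_measure_univ_lt_tsum_measure volume
      (fun q => measurableSet_closedBall.nullMeasurableSet) hlt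
  -- distances
  have key : ∀ q q' : Fin (N+1), (S q ∩ S q').Nonempty →
      ∀ r, |(((q:ℕ):ℝ) - ((q':ℕ):ℝ)) * α r - round ((((q:ℕ):ℝ) - ((q':ℕ):ℝ)) * α r)| ≤ δ := by
    intro a b hab r
    obtain ⟨x, hx1, hx2⟩ := hab
    have h1 : dist (f a r) (x r) ≤ δ/2 :=
      le_trans (dist_le_pi_dist _ _ r) (by simpa [dist_comm, hSdef, mem_closedBall] using hx1)
    have h2 : dist (x r) (f b r) ≤ δ/2 :=
      le_trans (dist_le_pi_dist _ _ r) (by simpa [hSdef, mem_closedBall] using hx2)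
    have h3 : dist (f a r) (f b r) ≤ δ := by
      calc dist (f a r) (f b r) ≤ dist (f a r) (x r) + dist (x r) (f b r) := dist_triangle _ _ _
      _ ≤ δ/2 + δ/2 := add_le_add h1 h2
      _ = δ := by ring
    have h4 : f a r - f b r = (((((a:ℕ):ℝ) - ((b:ℕ):ℝ)) * α r : ℝ) : AddCircle (1:ℝ)) := by
      rw [hfdef]
      simp only
      rw [← AddCircle.coe_sub]
      congr 1
      ring
    have h5 : ‖f a r - f b r‖ ≤ δ := by rwa [← dist_eq_norm]
    rw [h4, AddCircle.norm_eq] at h5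
    simpa using h5
  -- wlog: produce q > q'
  have main : ∀ a b : Fin (N+1), (b:ℕ) < (a:ℕ) → (S a ∩ S b).Nonempty →
      ∃ q₀ : ℤ, 1 ≤ q₀ ∧ (q₀ : ℝ) ≤ (n : ℝ) ^ κ ∧
      ∃ s : Fin m → ℝ,
        (∀ r : Fin m, ∃ z : ℤ, (q₀ : ℝ) * t r / (2 * Real.pi * n) - s r = (z : ℝ)) ∧
        (∑ r, s r ^ 2) ≤ (m : ℝ) * (n : ℝ) ^ (-(2 * κ) / m) := by
    intro a b hba hab
    refine ⟨(a:ℕ) - (b:ℕ), by omega, ?_, ?_⟩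
    · have ha : (a:ℕ) ≤ N := by omega
      have : (((a:ℕ) - (b:ℕ) : ℤ) : ℝ) ≤ (N:ℝ) := by
        push_cast; have : ((a:ℕ):ℝ) ≤ (N:ℝ) := by exact_mod_cast ha
        have hb0 : (0:ℝ) ≤ ((b:ℕ):ℝ) := by positivity
        linarith
      linarith
    · set y : Fin m → ℝ := fun r => ((((a:ℕ) - (b:ℕ) : ℤ)):ℝ) * t r / (2 * Real.pi * n) with hydef
      refine ⟨fun r => y r - round (y r), fun r => ⟨round (y r), by ring⟩, ?_⟩
      have hbnd : ∀ r, |y r - round (y r)| ≤ δ := by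
        intro r
        have := key a b hab r
        have hyr : y r = (((a:ℕ):ℝ) - ((b:ℕ):ℝ)) * α r := by
          rw [hydef, hαdef]
          push_cast
          ring
        rwa [← hyr] at this
      have hδ2 : δ ^ 2 = (n:ℝ) ^ (-(2*κ)/m) := by
        rw [hδdef, ← Real.rpow_natCast ((n:ℝ) ^ (-(κ/(m:ℝ)))) 2, ← Real.rpow_mul (by positivity),
          show (-(κ/(m:ℝ))) * ((2:ℕ):ℝ) = -(2*κ)/(m:ℝ) by push_cast; ring]
      calc ∑ r, (y r - round (y r)) ^ 2 ≤ ∑ _r : Fin m, δ ^ 2 := by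
            refine Finset.sum_le_sum fun r _ => ?_
            have := hbnd r
            have habs := abs_le.mp this
            nlinarith [sq_nonneg (y r - round (y r))]
        _ = (m:ℝ) * (n:ℝ) ^ (-(2*κ)/m) := by
            rw [Finset.sum_const, Finset.card_univ, Fintype.card_fin, nsmul_eq_mul, hδ2]
  rcases lt_or_gt_of_ne (fun h : (q:ℕ) = (q':ℕ) => hne (Fin.ext h)) with h | h
  · exact main q' q h (by rwa [Set.inter_comm] at hinter)
  · exact main q q' h hinter
end
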